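/- arXiv:1705.06553 — 3 statements merged into one kernel-verified Lean document; each statement's English description precedes it below -/
import Mathlib

section
/- Let F be an existentially closed (Z ⋊ Z)-field (a field with automorphisms σ, τ satisfying στ = τσ⁻¹ that is existentially closed in the class of such fields). Then for every n > 2 there exists c ∈ F such that τ(c) = −c, c + σ(c) + ... + σ^{n−1}(c) = 0, and c + σ(c) + ... + σ^{k−1}(c) ≠ 0 for all 0 < k < n. -/
universe u

noncomputable section

/-- A finite system of difference-polynomial conditions over `K` in `k` variables:
equations `f = 0` for `f ∈ polys` and inequations `g ≠ 0` for `g ∈ negs`, where the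
polynomials are in the transforms `σᵃτᵇ(xᵢ)` of the variables, the finitely many
transforms used being recorded by `words`. This is the quantifier-free data of the
language of `(ℤ ⋊ ℤ)`-fields. -/
structure ZZSystem (K : Type u) [Field K] (k : ℕ) where
  nwords : ℕ
  words : Fin nwords → ℤ × ℤ
  polys : List (MvPolynomial (Fin k × Fin nwords) K)
  negs : List (MvPolynomial (Fin k × Fin nwords) K)

/-- Satisfaction of a system in a `(ℤ ⋊ ℤ)`-field `(L, σ, τ)` containing `K` via `ι`,
by a tuple `x`. -/
def ZZSystem.Sat {K : Type u} [Field K] {k : ℕ} (S : ZZSystem K k)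
    {L : Type u} [Field L] (ι : K →+* L) (σ τ : RingAut L) (x : Fin k → L) : Prop :=
  (∀ f ∈ S.polys,
    MvPolynomial.eval₂ ι
      (fun p => (σ ^ (S.words p.2).1 * τ ^ (S.words p.2).2) (x p.1)) f = 0) ∧
  (∀ g ∈ S.negs,
    MvPolynomial.eval₂ ι
      (fun p => (σ ^ (S.words p.2).1 * τ ^ (S.words p.2).2) (x p.1)) g ≠ 0)

/-- Solvability of a system. -/
def ZZSystem.SolvableIn {K : Type u} [Field K] {k : ℕ} (S : ZZSystem K k)
    {L : Type u} [Field L] (ι : K →+* L) (σ τ : RingAut L) : Prop :=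
  ∃ x : Fin k → L, S.Sat ι σ τ x

/-- A `(ℤ ⋊ ℤ)`-field `(K, σ, τ)` (so `στ = τσ⁻¹`) is existentially closed if every
finite quantifier-free system over `K` that is solvable in some `(ℤ ⋊ ℤ)`-field extension
of `(K, σ, τ)` is already solvable in `K`. -/
def IsECZZField (K : Type u) [Field K] (σ τ : RingAut K) : Prop :=
  σ * τ = τ * σ⁻¹ ∧
    ∀ (L : Type u) [Field L] (ι : K →+* L) (σL τL : RingAut L),
      σL * τL = τL * σL⁻¹ →
      (∀ a : K, σL (ι a) = ι (σ a)) → (∀ a : K, τL (ι a) = ι (τ a)) →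
      ∀ (k : ℕ) (S : ZZSystem K k),
        S.SolvableIn ι σL τL → S.SolvableIn (RingHom.id K) σ τ

/-!
Over `F` take the rational function field in `X₀, …, X_{m-1}` and the `m + 1` linear forms
`t₀, …, t_m` given by the variables and minus their sum: a generic family indexed by `ℤ/(m+1)`
whose only relation is that it sums to zero. Extending `σ` by `tᵢ ↦ tᵢ₊₁` and `τ` by
`tᵢ ↦ -t₋ᵢ` gives a `(ℤ ⋊ ℤ)`-field containing `F`, because both come from a group action in
which the relation holds (on indices, `(i ↦ -i + 1) = (i ↦ -(i - 1))`). There `c = t₀` has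
`τ c = -c`, `c + ⋯ + σᵐ c = t₀ + ⋯ + t_m = 0`, and the shorter partial sums are the nonzero
`X₀ + ⋯ + X_{k-1}`. These conditions form a quantifier-free system in one unknown, so existential
closedness yields a solution in `F`.
-/

open MvPolynomial

def IsOrbitSumWitness {L : Type*} [Field L] (σ τ : RingAut L) (n : ℕ) (c : L) : Prop :=
  τ c = -c ∧ (∑ j ∈ Finset.range n, (σ ^ j) c) = 0 ∧
    ∀ k : ℕ, 0 < k → k < n → (∑ j ∈ Finset.range k, (σ ^ j) c) ≠ 0

namespace ZZSystem

def orbitWords (n : ℕ) : Fin (n + 2) → ℤ × ℤ :=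
  Fin.lastCases (0, 1) fun j => ((j : ℕ), 0)

def orbitPartialSum (K : Type u) [Field K] (n k : ℕ) : MvPolynomial (Fin 1 × Fin (n + 2)) K :=
  ∑ j ∈ Finset.univ.filter (fun j : Fin (n + 1) => (j : ℕ) < k), X (0, j.castSucc)

abbrev orbitSystem (K : Type u) [Field K] (n : ℕ) : ZZSystem K 1 where
  nwords := n + 2
  words := orbitWords n
  polys := [X (0, Fin.last (n + 1)) + X (0, Fin.castSucc 0), orbitPartialSum K n n]
  negs := (List.range' 1 (n - 1)).map (orbitPartialSum K n)

variable {K : Type u} [Field K] {L : Type u} [Field L] (ι : K →+* L) (σ τ : RingAut L)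
  (x : Fin 1 → L) {n : ℕ}

lemma eval₂_orbitPartialSum {k : ℕ} (hk : k ≤ n + 1) :
    eval₂ ι (fun p => (σ ^ (orbitWords n p.2).1 * τ ^ (orbitWords n p.2).2) (x p.1))
      (orbitPartialSum K n k) = ∑ j ∈ Finset.range k, (σ ^ j) (x 0) := by
  have hrange : (Finset.range (n + 1)).filter (· < k) = Finset.range k := by
    ext j; simp only [Finset.mem_filter, Finset.mem_range]; omega
  simp only [orbitPartialSum, eval₂_sum, eval₂_X, orbitWords, Fin.lastCases_castSucc,
    zpow_natCast, zpow_zero, mul_one, Fin.isValue]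
  rw [Finset.sum_filter, Fin.sum_univ_eq_sum_range (fun j => if j < k then (σ ^ j) (x 0) else 0),
    ← Finset.sum_filter, hrange]

lemma sat_orbitSystem_iff :
    (orbitSystem K n).Sat ι σ τ x ↔ IsOrbitSumWitness σ τ n (x 0) := by
  have hτ : eval₂ ι (fun p => (σ ^ (orbitWords n p.2).1 * τ ^ (orbitWords n p.2).2) (x p.1))
      (X (0, Fin.last (n + 1)) + X (0, Fin.castSucc 0)) = τ (x 0) + x 0 := by
    simp only [eval₂_add, eval₂_X, orbitWords, Fin.lastCases_last, Fin.lastCases_castSucc,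
      Fin.val_zero, Nat.cast_zero, zpow_zero, zpow_one, one_mul, mul_one, RingAut.one_apply]
  simp only [Sat, orbitSystem, List.forall_mem_cons, List.not_mem_nil,
    IsEmpty.forall_iff, implies_true, and_true, List.forall_mem_map, List.mem_range'_1, hτ,
    eval₂_orbitPartialSum ι σ τ x (Nat.le_succ n), IsOrbitSumWitness, ← eq_neg_iff_add_eq_zero]
  rw [and_assoc]
  refine and_congr_right' (and_congr_right' (forall_congr' fun k => ⟨?_, ?_⟩))
  · intro h hk hkn
    rw [← eval₂_orbitPartialSum ι σ τ x (by omega : k ≤ n + 1)]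
    exact h ⟨hk, by omega⟩
  · rintro h ⟨hk, hkn⟩
    rw [eval₂_orbitPartialSum ι σ τ x (by omega : k ≤ n + 1)]
    exact h hk (by omega)

end ZZSystem

namespace CyclicExtension

variable {F : Type u} [Field F] {m : ℕ}

def cyclicVar (F : Type u) [Field F] (m : ℕ) : Fin (m + 1) → MvPolynomial (Fin m) F :=
  Fin.snoc X (-∑ j, X j)

@[simp] lemma cyclicVar_castSucc (j : Fin m) : cyclicVar F m j.castSucc = X j :=
  Fin.snoc_castSucc ..

lemma sum_cyclicVar : ∑ i, cyclicVar F m i = 0 := by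
  simp [Fin.sum_univ_castSucc, cyclicVar]

lemma map_cyclicVar {S : Type*} [CommRing S] (ψ : MvPolynomial (Fin m) F →+* S)
    {w : Fin (m + 1) → S} (hw : ∑ i, w i = 0) (hψ : ∀ j, ψ (X j) = w j.castSucc)
    (i : Fin (m + 1)) : ψ (cyclicVar F m i) = w i := by
  cases i using Fin.lastCases with
  | cast j => rw [cyclicVar_castSucc, hψ]
  | last =>
    rw [Fin.sum_univ_castSucc, ← eq_neg_iff_add_eq_zero] at hw
    simp [cyclicVar, hψ, hw]

def cyclicSubst (φ : RingAut F) (ε : ℤˣ) (e : Equiv.Perm (Fin (m + 1))) :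
    MvPolynomial (Fin m) F →+* MvPolynomial (Fin m) F :=
  eval₂Hom (C.comp φ.toRingHom) fun j => ε • cyclicVar F m (e j.castSucc)

@[simp] lemma cyclicSubst_C (φ : RingAut F) (ε : ℤˣ) (e : Equiv.Perm (Fin (m + 1))) (a : F) :
    cyclicSubst φ ε e (C a) = C (φ a) :=
  eval₂Hom_C ..

@[simp] lemma cyclicSubst_cyclicVar (φ : RingAut F) (ε : ℤˣ) (e : Equiv.Perm (Fin (m + 1)))
    (i : Fin (m + 1)) : cyclicSubst φ ε e (cyclicVar F m i) = ε • cyclicVar F m (e i) := by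
  refine map_cyclicVar (w := fun i => ε • cyclicVar F m (e i)) _ ?_ (fun j => ?_) i
  · rw [← Finset.smul_sum, Equiv.sum_comp e (cyclicVar F m), sum_cyclicVar, smul_zero]
  · exact eval₂Hom_X' ..

lemma ringHom_ext_cyclicVar {S : Type*} [CommRing S] {ψ ψ' : MvPolynomial (Fin m) F →+* S}
    (hC : ∀ a, ψ (C a) = ψ' (C a)) (hvar : ∀ i, ψ (cyclicVar F m i) = ψ' (cyclicVar F m i)) :
    ψ = ψ' :=
  ringHom_ext hC fun j => by simpa using hvar j.castSucc

lemma cyclicSubst_comp (φ φ' : RingAut F) (ε ε' : ℤˣ) (e e' : Equiv.Perm (Fin (m + 1))) :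
    (cyclicSubst φ ε e).comp (cyclicSubst φ' ε' e') = cyclicSubst (φ * φ') (ε * ε') (e * e') :=
  ringHom_ext_cyclicVar (by simp) fun i => by simp [mul_smul, smul_comm ε ε']

lemma cyclicSubst_one :
    cyclicSubst (1 : RingAut F) 1 (1 : Equiv.Perm (Fin (m + 1))) = RingHom.id _ :=
  ringHom_ext_cyclicVar (by simp) fun i => by simp

def cyclicAut :
    RingAut F × ℤˣ × Equiv.Perm (Fin (m + 1)) →* RingAut (MvPolynomial (Fin m) F) where
  toFun g :=
    RingEquiv.ofRingHom (cyclicSubst g.1 g.2.1 g.2.2) (cyclicSubst g.1⁻¹ g.2.1⁻¹ g.2.2⁻¹)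
    (by rw [cyclicSubst_comp]; simpa using cyclicSubst_one)
    (by rw [cyclicSubst_comp]; simpa using cyclicSubst_one)
  map_one' := by ext1 p; simpa using RingHom.congr_fun cyclicSubst_one p
  map_mul' g g' := by ext1 p; exact (RingHom.congr_fun (cyclicSubst_comp ..) p).symm

@[simp] lemma cyclicAut_C (g : RingAut F × ℤˣ × Equiv.Perm (Fin (m + 1))) (a : F) :
    cyclicAut g (C a) = C (g.1 a) :=
  cyclicSubst_C ..

@[simp] lemma cyclicAut_cyclicVar (g : RingAut F × ℤˣ × Equiv.Perm (Fin (m + 1)))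
    (i : Fin (m + 1)) : cyclicAut g (cyclicVar F m i) = g.2.1 • cyclicVar F m (g.2.2 i) :=
  cyclicSubst_cyclicVar ..

lemma addRight_one_pow_apply_zero {j : ℕ} (hj : j < m + 1) :
    (Equiv.addRight (1 : Fin (m + 1)) ^ j) 0 = ⟨j, hj⟩ := by
  induction j with
  | zero => rfl
  | succ j ih =>
    rw [pow_succ', Equiv.Perm.mul_apply, ih (by omega), Equiv.coe_addRight]
    exact Fin.ext (Fin.val_add_one_of_lt' (by simpa using hj))

lemma sum_cyclicVar_orbit :
    ∑ j ∈ Finset.range (m + 1), cyclicVar F m ((Equiv.addRight 1 ^ j) 0) = 0 := by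
  rw [Finset.sum_range, ← sum_cyclicVar]
  exact Finset.sum_congr rfl fun i _ => by rw [addRight_one_pow_apply_zero i.isLt]

lemma sum_cyclicVar_orbit_ne_zero {k : ℕ} (hk0 : 0 < k) (hkm : k ≤ m) :
    ∑ j ∈ Finset.range k, cyclicVar F m ((Equiv.addRight 1 ^ j) 0) ≠ 0 := by
  let v : Fin m → F := fun i => if (i : ℕ) = 0 then 1 else 0
  have hv : ∀ j ∈ Finset.range k, eval v (cyclicVar F m ((Equiv.addRight 1 ^ j) 0)) =
      if j = 0 then 1 else 0 := fun j hj => by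
    have hjm : j < m := (Finset.mem_range.1 hj).trans_le hkm
    rw [addRight_one_pow_apply_zero (by omega),
      show (⟨j, _⟩ : Fin (m + 1)) = Fin.castSucc ⟨j, hjm⟩ from rfl, cyclicVar_castSucc, eval_X]
  intro h
  have := congrArg (eval v) h
  rw [map_sum, Finset.sum_congr rfl hv, Finset.sum_ite_eq', if_pos (Finset.mem_range.2 hk0),
    map_zero] at this
  exact one_ne_zero this

abbrev CyclicField (F : Type u) [Field F] (m : ℕ) := FractionRing (MvPolynomial (Fin m) F)

def fracAut : RingAut F × ℤˣ × Equiv.Perm (Fin (m + 1)) →* RingAut (CyclicField F m) :=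
  (IsFractionRing.ringEquivOfRingEquivHom _ _).comp cyclicAut

lemma fracAut_algebraMap (g : RingAut F × ℤˣ × Equiv.Perm (Fin (m + 1)))
    (p : MvPolynomial (Fin m) F) :
    fracAut g (algebraMap _ (CyclicField F m) p) =
      algebraMap _ (CyclicField F m) (cyclicAut g p) :=
  IsFractionRing.ringEquivOfRingEquiv_algebraMap ..

lemma fracAut_algebraMap_base (g : RingAut F × ℤˣ × Equiv.Perm (Fin (m + 1))) (a : F) :
    fracAut g (algebraMap F (CyclicField F m) a) = algebraMap F (CyclicField F m) (g.1 a) := by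
  simp only [IsScalarTower.algebraMap_apply F (MvPolynomial (Fin m) F) (CyclicField F m),
    fracAut_algebraMap, algebraMap_eq, cyclicAut_C]

variable (m) in
def shiftAut (σ : RingAut F) : RingAut (CyclicField F m) := fracAut (σ, 1, Equiv.addRight 1)

variable (m) in
def reflAut (τ : RingAut F) : RingAut (CyclicField F m) := fracAut (τ, -1, Equiv.neg _)

lemma shiftAut_mul_reflAut {σ τ : RingAut F} (h : σ * τ = τ * σ⁻¹) :
    shiftAut m σ * reflAut m τ = reflAut m τ * (shiftAut m σ)⁻¹ := by
  simp only [shiftAut, reflAut, ← map_mul, ← map_inv]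
  congr 1
  refine Prod.ext h (Prod.ext (by simp) (Equiv.ext fun i => ?_))
  simp only [Prod.mk_mul_mk, mul_neg, mul_one, Equiv.Perm.coe_mul, Equiv.coe_addRight,
    Equiv.neg_apply, Function.comp_apply, Prod.inv_mk, inv_one, Equiv.neg_addRight, neg_add_rev,
    neg_neg]
  abel

lemma isOrbitSumWitness_cyclicVar_zero (σ τ : RingAut F) :
    IsOrbitSumWitness (shiftAut m σ) (reflAut m τ) (m + 1)
      (algebraMap _ (CyclicField F m) (cyclicVar F m 0)) := by
  have hpow : ∀ j : ℕ, (shiftAut m σ ^ j) (algebraMap _ _ (cyclicVar F m 0)) =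
      algebraMap _ (CyclicField F m) (cyclicVar F m ((Equiv.addRight 1 ^ j) 0)) := fun j => by
    rw [shiftAut, ← map_pow, fracAut_algebraMap, Prod.pow_mk, Prod.pow_mk, cyclicAut_cyclicVar,
      one_pow, one_smul]
  refine ⟨?_, ?_, fun k hk0 hkm => ?_⟩
  · simp [reflAut, fracAut_algebraMap]
  · simp only [hpow, ← map_sum, sum_cyclicVar_orbit, map_zero]
  · simp only [hpow, ← map_sum]
    exact (map_ne_zero_iff _ (IsFractionRing.injective _ _)).2
      (sum_cyclicVar_orbit_ne_zero hk0 (by omega))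

end CyclicExtension

theorem statement9_general (F : Type u) [Field F] (σ τ : RingAut F)
    (hec : IsECZZField F σ τ) (n : ℕ) :
    ∃ c : F, τ c = -c ∧ (∑ j ∈ Finset.range n, (σ ^ j) c) = 0 ∧
      ∀ k : ℕ, 0 < k → k < n → (∑ j ∈ Finset.range k, (σ ^ j) c) ≠ 0 := by
  obtain _ | m := n
  · exact ⟨0, by simp⟩
  open CyclicExtension ZZSystem in
  obtain ⟨x, hx⟩ : (orbitSystem F (m + 1)).SolvableIn (RingHom.id F) σ τ :=
    hec.2 (CyclicField F m) (algebraMap F _) (shiftAut m σ) (reflAut m τ)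
      (shiftAut_mul_reflAut hec.1) (fracAut_algebraMap_base _) (fracAut_algebraMap_base _) 1 _
      ⟨fun _ => _, (sat_orbitSystem_iff ..).2 (isOrbitSumWitness_cyclicVar_zero σ τ)⟩
  exact ⟨x 0, (ZZSystem.sat_orbitSystem_iff _ _ _ x).1 hx⟩

/-- Let `(F, σ, τ)` be an existentially closed `(ℤ ⋊ ℤ)`-field. Then for every `n > 2`
there exists `c ∈ F` with `τ(c) = -c`, `c + σ(c) + ⋯ + σ^{n-1}(c) = 0`, and
`c + σ(c) + ⋯ + σ^{k-1}(c) ≠ 0` for all `0 < k < n`. -/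
theorem statement9 (F : Type u) [Field F] (σ τ : RingAut F)
    (hec : IsECZZField F σ τ) (n : ℕ) (hn : 2 < n) :
    ∃ c : F, τ c = -c ∧ (∑ j ∈ Finset.range n, (σ ^ j) c) = 0 ∧
      ∀ k : ℕ, 0 < k → k < n → (∑ j ∈ Finset.range k, (σ ^ j) c) ≠ 0 :=
  statement9_general F σ τ hec n
end
end

section
/- Let (K, σ) be a difference field and (V, W) a Z-pair. Then the transformal kernel (K(V), K(W), σ′) arising from (V, W) has a prolongation (L, σ̃) which is a difference field extension of (K, σ); in particular there is a difference field extension (L, σ̃) of (K, σ) and a point a ∈ V(L) with (a, σ̃(a)) ∈ W(L). -/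
universe u

noncomputable section

open MvPolynomial

variable {K : Type u} [Field K]

/-- The `σ`-transform `ᔆV` of a variety: the image of its (prime) ideal under the
coefficient-wise action of the automorphism `σ`. -/
def idealTransform {n : Type*} (σ : K ≃+* K) (P : Ideal (MvPolynomial n K)) :
    Ideal (MvPolynomial n K) :=
  P.map (MvPolynomial.map (σ : K →+* K))

/-- The function field `K(V)` of the variety given by the prime ideal `P`. -/
abbrev funField {n : Type*} (P : Ideal (MvPolynomial n K)) :=
  FractionRing (MvPolynomial n K ⧸ P)

/-- The structure embedding `K → K(V)`. -/
def funFieldC {n : Type*} (P : Ideal (MvPolynomial n K)) : K →+* funField P :=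
  (algebraMap (MvPolynomial n K ⧸ P) (funField P)).comp
    ((Ideal.Quotient.mk P).comp MvPolynomial.C)

/-- The coordinate functions of `K(V)`, i.e. the canonical `K`-generic point of `V` in
`V(K(V))`. -/
def funFieldX {n : Type*} (P : Ideal (MvPolynomial n K)) (i : n) : funField P :=
  algebraMap (MvPolynomial n K ⧸ P) (funField P) (Ideal.Quotient.mk P (MvPolynomial.X i))

/-!
The inclusion `ι : K(V) → K(W)` and the kernel map `σ′ : K(V) → K(W)` are two embeddings of the
same field, and a prolongation is a field `L ⊇ K(W)` with an automorphism `σ̃` satisfying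
`σ̃ ∘ ι = σ′`. Amalgamating `K(W)` with itself over `K(V)` (along `ι` on one side, `σ′` on the
other) gives a field `K(W′)` and a map `K(W) → K(W′)` prolonging `σ′`; iterating the construction
yields a tower whose union carries an endomorphism prolonging `σ′`. Taking the direct limit of
that field along the endomorphism itself makes it an automorphism (the inversive closure).
-/

section Amalgamation

variable {A B₁ B₂ : Type u} [Field A] [Field B₁] [Field B₂]

theorem exists_field_amalgam (u : A →+* B₁) (v : A →+* B₂) :
    Nonempty (Σ' (C : Type u) (_ : Field C) (g₁ : B₁ →+* C) (g₂ : B₂ →+* C),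
      ∀ a, g₁ (u a) = g₂ (v a)) := by
  let : Algebra A B₁ := u.toAlgebra
  let : Algebra A B₂ := v.toAlgebra
  obtain ⟨M, hM⟩ := Ideal.exists_maximal (TensorProduct A B₁ B₂)
  let : Field (TensorProduct A B₁ B₂ ⧸ M) := Ideal.Quotient.field M
  refine ⟨⟨TensorProduct A B₁ B₂ ⧸ M, inferInstance,
    (Ideal.Quotient.mk M).comp Algebra.TensorProduct.includeLeftRingHom,
    (Ideal.Quotient.mk M).comp (Algebra.TensorProduct.includeRight (R := A) (A := B₁)).toRingHom,
    fun a => congrArg (Ideal.Quotient.mk M) ?_⟩⟩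
  change algebraMap A B₁ a ⊗ₜ[A] (1 : B₂) = (1 : B₁) ⊗ₜ[A] algebraMap A B₂ a
  rw [Algebra.algebraMap_eq_smul_one, Algebra.algebraMap_eq_smul_one, TensorProduct.smul_tmul]

end Amalgamation

structure EmbeddingPair : Type (u + 1) where
  dom : Type u
  cod : Type u
  [domField : Field dom]
  [codField : Field cod]
  incl : dom →+* cod
  shift : dom →+* cod

attribute [instance] EmbeddingPair.domField EmbeddingPair.codField

namespace EmbeddingPair

/-- The pair `p.cod ⇉ C` obtained by amalgamating `p.cod` with itself over `p.incl` and
`p.shift`, so that the new shift prolongs the old one along the inclusions. -/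
def next (p : EmbeddingPair.{u}) : EmbeddingPair.{u} :=
  let C := Classical.choice (exists_field_amalgam p.incl p.shift)
  { dom := p.cod, cod := C.1, domField := p.codField, codField := C.2.1,
    incl := C.2.2.2.1, shift := C.2.2.1 }

theorem next_shift_incl (p : EmbeddingPair.{u}) (x : p.dom) :
    p.next.shift (p.incl x) = p.next.incl (p.shift x) :=
  (Classical.choice (exists_field_amalgam p.incl p.shift)).2.2.2.2 x

def tower (p : EmbeddingPair.{u}) : ℕ → EmbeddingPair.{u}
  | 0 => p
  | n + 1 => (tower p n).next

theorem tower_succ_shift_incl (p : EmbeddingPair.{u}) (n : ℕ) (x : (p.tower n).dom) :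
    (p.tower (n + 1)).shift ((p.tower n).incl x) = (p.tower (n + 1)).incl ((p.tower n).shift x) :=
  next_shift_incl _ x

end EmbeddingPair

section ChainLimit

variable {G : ℕ → Type u} [∀ n, Field (G n)] (f : ∀ n, G n →+* G (n + 1))

def chainMap (i j : ℕ) (h : i ≤ j) : G i →+* G j :=
  Nat.leRecOn h (fun g => (f _).comp g) (RingHom.id (G i))

theorem chainMap_self {i : ℕ} (h : i ≤ i) (x : G i) : chainMap f i i h x = x := by
  rw [chainMap, Nat.leRecOn_self]; rfl

theorem chainMap_succ {i j : ℕ} (h : i ≤ j) (h' : i ≤ j + 1) (x : G i) :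
    chainMap f i (j + 1) h' x = f j (chainMap f i j h x) := by
  rw [chainMap, chainMap, Nat.leRecOn_succ h]; rfl

instance : DirectedSystem G fun i j h => chainMap f i j h where
  map_self _ x := chainMap_self f _ x
  map_map {k j i} hij hjk x := by
    induction k, hjk using Nat.le_induction with
    | base => rw [chainMap_self]
    | succ k hjk ih => rw [chainMap_succ f hjk, chainMap_succ f (hij.trans hjk), ih]

theorem apply_chainMap {P : Type*} [CommRing P] (g : ∀ n, G n →+* P)
    (hg : ∀ n x, g (n + 1) (f n x) = g n x) (i j : ℕ) (h : i ≤ j) (x : G i) :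
    g j (chainMap f i j h x) = g i x := by
  induction j, h using Nat.le_induction with
  | base => rw [chainMap_self]
  | succ j hij ih => rw [chainMap_succ f hij, hg, ih]

abbrev ChainLimit : Type u := Ring.DirectLimit G fun i j h => chainMap f i j h

instance : Field (ChainLimit f) := Field.DirectLimit.field G (chainMap f)

namespace ChainLimit

def of (n : ℕ) : G n →+* ChainLimit f := Ring.DirectLimit.of G _ n

theorem of_succ (n : ℕ) (x : G n) : of f (n + 1) (f n x) = of f n x := by
  have := Ring.DirectLimit.of_f (G := G) (f := fun i j h => chainMap f i j h) n.le_succ x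
  rwa [chainMap_succ f le_rfl, chainMap_self] at this

variable {f} {P : Type*} [CommRing P]

def lift (g : ∀ n, G n →+* P) (hg : ∀ n x, g (n + 1) (f n x) = g n x) : ChainLimit f →+* P :=
  Ring.DirectLimit.lift G _ P g (apply_chainMap f g hg)

@[simp]
theorem lift_of (g : ∀ n, G n →+* P) (hg : ∀ n x, g (n + 1) (f n x) = g n x) (n : ℕ) (x : G n) :
    lift g hg (of f n x) = g n x :=
  Ring.DirectLimit.lift_of ..

theorem hom_ext {g₁ g₂ : ChainLimit f →+* P} (h : ∀ n x, g₁ (of f n x) = g₂ (of f n x)) :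
    g₁ = g₂ :=
  Ring.DirectLimit.hom_ext _ fun n => RingHom.ext (h n)

end ChainLimit

end ChainLimit

section Conjugation

variable {A B M : Type u} [Field A] [Field B] [Field M]

theorem exists_ringEquiv_extending (t : M →+* M) :
    ∃ (L : Type u) (_ : Field L) (i : M →+* L) (s : L ≃+* L), ∀ x, s (i x) = i (t x) := by
  let F : ∀ _ : ℕ, M →+* M := fun _ => t
  have of_t (n : ℕ) (x : M) : ChainLimit.of F (n + 1) (t x) = ChainLimit.of F n x :=
    ChainLimit.of_succ F n x
  -- `s` applies `t` in place, its inverse moves each element one step up the chain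
  let s := ChainLimit.lift (fun n => (ChainLimit.of F n).comp t) fun n x => of_t n (t x)
  let s' := ChainLimit.lift (fun n => ChainLimit.of F (n + 1)) fun n x => of_t (n + 1) x
  have hs's : s'.comp s = RingHom.id _ := ChainLimit.hom_ext fun n x => by simp [s, s', F, of_t]
  have hss' : s.comp s' = RingHom.id _ := ChainLimit.hom_ext fun n x => by simp [s, s', F, of_t]
  exact ⟨_, inferInstance, ChainLimit.of F 0, .ofRingHom s s' hss' hs's, fun x => by simp [s, F]⟩

theorem exists_ringHom_conj (u v : A →+* B) :
    ∃ (L : Type u) (_ : Field L) (j : B →+* L) (t : L →+* L), ∀ a, t (j (u a)) = j (v a) := by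
  let T := EmbeddingPair.tower ⟨A, B, u, v⟩
  let F : ∀ n, (T n).cod →+* (T (n + 1)).cod := fun n => (T (n + 1)).incl
  have shift_incl (n : ℕ) (x : (T n).dom) :
      ChainLimit.of F (n + 1) ((T (n + 1)).shift ((T n).incl x)) =
        ChainLimit.of F n ((T n).shift x) :=
    (congrArg _ (EmbeddingPair.tower_succ_shift_incl _ n x)).trans (ChainLimit.of_succ F n _)
  let t := ChainLimit.lift (f := F) (fun n => (ChainLimit.of F (n + 1)).comp (T (n + 1)).shift)
    fun n x => shift_incl (n + 1) x
  exact ⟨_, inferInstance, ChainLimit.of F 0, t, fun a => shift_incl 0 a⟩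

theorem exists_ringEquiv_conj (u v : A →+* B) :
    ∃ (L : Type u) (_ : Field L) (j : B →+* L) (s : L ≃+* L), ∀ a, s (j (u a)) = j (v a) := by
  obtain ⟨M, _, j, t, ht⟩ := exists_ringHom_conj u v
  obtain ⟨L, _, i, s, hs⟩ := exists_ringEquiv_extending t
  exact ⟨L, inferInstance, i.comp j, s, fun a => by simp [hs, ht]⟩

end Conjugation

section FunctionField

variable {n n' : Type*}

def funFieldMk (P : Ideal (MvPolynomial n K)) : MvPolynomial n K →+* funField P :=
  (algebraMap (MvPolynomial n K ⧸ P) (funField P)).comp (Ideal.Quotient.mk P)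

@[simp]
theorem funFieldMk_C (P : Ideal (MvPolynomial n K)) (k : K) : funFieldMk P (C k) = funFieldC P k :=
  rfl

@[simp]
theorem funFieldMk_X (P : Ideal (MvPolynomial n K)) (i : n) : funFieldMk P (X i) = funFieldX P i :=
  rfl

theorem funFieldMk_eq_eval₂ (P : Ideal (MvPolynomial n K)) (f : MvPolynomial n K) :
    funFieldMk P f = eval₂ (funFieldC P) (funFieldX P) f := by
  conv_lhs => rw [← eval₂_eta f]
  rw [eval₂_comp_left]
  rfl

theorem eval₂_funFieldX_eq_zero {L : Type*} [CommSemiring L] {Q : Ideal (MvPolynomial n K)}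
    (j : funField Q →+* L) {f : MvPolynomial n K} (hf : f ∈ Q) :
    eval₂ (j.comp (funFieldC Q)) (fun i => j (funFieldX Q i)) f = 0 := by
  rw [← Function.comp_def j, ← eval₂_comp_left, ← funFieldMk_eq_eval₂, funFieldMk,
    RingHom.comp_apply, Ideal.Quotient.eq_zero_iff_mem.2 hf, map_zero, map_zero]

/-- The embedding `K(V) → K(W)` induced by a dominant morphism `W → V`, given by its comorphism
`φ` with `φ⁻¹(Q) = P`. -/
def funFieldMap (P : Ideal (MvPolynomial n K)) (Q : Ideal (MvPolynomial n' K)) [Q.IsPrime]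
    (φ : MvPolynomial n K →+* MvPolynomial n' K) (hφ : Q.comap φ = P) :
    funField P →+* funField Q :=
  IsFractionRing.map (Ideal.quotientMap_injective' (f := φ) (H := hφ.ge) hφ.le)

theorem funFieldMap_funFieldMk (P : Ideal (MvPolynomial n K)) (Q : Ideal (MvPolynomial n' K))
    [Q.IsPrime] (φ : MvPolynomial n K →+* MvPolynomial n' K) (hφ : Q.comap φ = P)
    (f : MvPolynomial n K) :
    funFieldMap P Q φ hφ (funFieldMk P f) = funFieldMk Q (φ f) := by
  simp only [funFieldMap, IsFractionRing.map, funFieldMk, RingHom.comp_apply,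
    IsLocalization.map_eq, Ideal.quotientMap_mk]

end FunctionField

/-- Let `(K, σ)` be a difference field and `(V, W)` a `ℤ`-pair, given by prime ideals
`P`, `Q` (with `W ⊆ V × ᔆV` and dominant projections, expressed by the contraction
conditions below). Then the transformal kernel `(K(V), K(W), σ′)` arising from `(V, W)`
has a prolongation `(L, σ̃)` which is a difference field extension of `(K, σ)`: there is a
field `L`, an automorphism `σ̃` of `L`, and an embedding `j : K(W) → L` such that `σ̃`
extends `σ` (via the structure embedding of `K`) and extends the kernel map `σ′` (i.e. on
the canonical generic point `a` of `V` inside `K(W)` it takes the `V`-coordinates to the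
`ᔆV`-coordinates); in particular `a ∈ V(L)` and `(a, σ̃(a)) ∈ W(L)`. -/
theorem statement15 {m : ℕ} (K : Type u) [Field K] (σ : K ≃+* K)
    (P : Ideal (MvPolynomial (Fin m) K)) [P.IsPrime]
    (Q : Ideal (MvPolynomial (Fin m ⊕ Fin m) K)) [Q.IsPrime]
    (hdom1 : Q.comap (MvPolynomial.rename (Sum.inl : Fin m → Fin m ⊕ Fin m)).toRingHom
      = P)
    (hdom2 : Q.comap (MvPolynomial.rename (Sum.inr : Fin m → Fin m ⊕ Fin m)).toRingHom
      = idealTransform σ P) :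
    ∃ (L : Type u) (_ : Field L) (s : L ≃+* L) (j : funField Q →+* L),
      -- `(L, s)` is a difference field extension of `(K, σ)`
      (∀ k : K, s (j (funFieldC Q k)) = j (funFieldC Q (σ k))) ∧
      -- `s` prolongs the kernel map `σ′ : K(V) → K(W)`
      (∀ i : Fin m, s (j (funFieldX Q (Sum.inl i))) = j (funFieldX Q (Sum.inr i))) ∧
      -- the point `a := j(x_V) ∈ V(L)`
      (∀ f ∈ P, MvPolynomial.eval₂ ((j : funField Q →+* L).comp (funFieldC Q))
        (fun i => j (funFieldX Q (Sum.inl i))) f = 0) ∧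
      -- and `(a, s(a)) ∈ W(L)`
      (∀ f ∈ Q, MvPolynomial.eval₂ ((j : funField Q →+* L).comp (funFieldC Q))
        (Sum.elim (fun i => j (funFieldX Q (Sum.inl i)))
          (fun i => s (j (funFieldX Q (Sum.inl i))))) f = 0) := by
  have hσ : Q.comap ((rename Sum.inr).toRingHom.comp (MvPolynomial.map (σ : K →+* K))) = P := by
    rw [← Ideal.comap_comap, hdom2, idealTransform,
      Ideal.comap_map_of_bijective (f := MvPolynomial.map (σ : K →+* K))
        (mapEquiv (Fin m) σ).bijective]
  obtain ⟨L, _, j, s, hs⟩ :=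
    exists_ringEquiv_conj (funFieldMap P Q _ hdom1) (funFieldMap P Q _ hσ)
  have hX (i : Fin m) : s (j (funFieldX Q (Sum.inl i))) = j (funFieldX Q (Sum.inr i)) := by
    simpa [← funFieldMk_X, funFieldMap_funFieldMk] using hs (funFieldX P i)
  refine ⟨L, inferInstance, s, j, fun k => ?_, hX, fun f hf => ?_, fun f hf => ?_⟩
  · simpa [← funFieldMk_C, funFieldMap_funFieldMk] using hs (funFieldC P k)
  · rw [← hdom1] at hf
    simpa [eval₂_rename, Function.comp_def] using eval₂_funFieldX_eq_zero j hf
  · convert eval₂_funFieldX_eq_zero j hf using 2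
    funext i
    rcases i with i | i
    exacts [rfl, hX i]
end
end

section
/- Let G be a finitely generated commutative group. Then Z × Z embeds in G as a direct summand if and only if G is not virtually free; consequently (granting that (Z×Z)-TCF and more generally ((Z⋊Z)⋊H)-TCF do not exist, while G-TCF exists for virtually free G), the theory G-TCF exists if and only if G is virtually free. -/
universe u

/-- A group is virtually free if it has a free subgroup of finite index. -/
def VirtuallyFree (G : Type u) [Group G] : Prop :=
  ∃ H : Subgroup G, H.FiniteIndex ∧ Nonempty (IsFreeGroup H)

/-- `ℤ × ℤ` is a direct summand of `G`: there are subgroups `H, K` with `G = H × K`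
internally and `H ≅ ℤ × ℤ`. -/
def HasZxZSummand (G : Type u) [Group G] : Prop :=
  ∃ H K : Subgroup G, IsCompl H K ∧ Nonempty (H ≃* Multiplicative (ℤ × ℤ))

/-!
A commutative free group is cyclic, and a torsion-free commutative group with a cyclic subgroup
of finite index is itself cyclic, since the `index`-th power map embeds it into that subgroup.
By Nielsen–Schreier, virtual freeness passes to subgroups, so a group containing `ℤ × ℤ` is not
virtually free. Conversely, by the structure theorem a finitely generated commutative group is
`ℤⁿ × T` with `T` finite: for `n ≤ 1` it is virtually free, and for `n ≥ 2` it splits off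
`ℤ × ℤ`. The statement about `G-TCF` then follows from the two hypotheses on it.
-/

open Subgroup DirectSum

theorem IsFreeGroup.isCyclic {F : Type*} [CommGroup F] [IsFreeGroup F] : IsCyclic F := by
  obtain ⟨ι, ⟨b⟩⟩ := IsFreeGroup.nonempty_basis (G := F)
  have : Subsingleton ι := by
    refine ⟨fun x y => by_contra fun hxy => ?_⟩
    -- two distinct generators would map onto non-commuting transpositions of `Fin 3`
    classical
    let σ : ι → Equiv.Perm (Fin 3) := fun z => if z = x then Equiv.swap 0 1 else Equiv.swap 0 2
    have hcomm : FreeGroup.of x * FreeGroup.of y = FreeGroup.of y * FreeGroup.of x :=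
      b.repr.symm.injective (by simp only [map_mul]; exact mul_comm _ _)
    have := congrArg (FreeGroup.lift σ) hcomm
    simp only [map_mul, FreeGroup.lift_apply_of, σ, if_neg (Ne.symm hxy)] at this
    exact absurd this (by decide)
  have : IsCyclic (FreeGroup ι) := by
    rcases isEmpty_or_nonempty ι with hι | ⟨⟨i⟩⟩
    · exact isCyclic_of_subsingleton
    · have := uniqueOfSubsingleton i
      infer_instance
  exact isCyclic_of_surjective b.repr.symm b.repr.symm.surjective

theorem isCyclic_of_isCyclic_finiteIndex {P : Type*} [CommGroup P] [IsMulTorsionFree P]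
    (J : Subgroup P) [J.FiniteIndex] [IsCyclic J] : IsCyclic P :=
  isCyclic_of_injective ((powMonoidHom J.index).codRestrict J J.pow_index_mem)
    fun _ _ h => pow_left_injective FiniteIndex.index_ne_zero (congrArg Subtype.val h)

theorem not_isCyclic_multiplicative_int_prod_int : ¬ IsCyclic (Multiplicative (ℤ × ℤ)) := by
  rw [(MulEquiv.prodMultiplicative ℤ ℤ).isCyclic]
  exact not_isCyclic_prod_of_infinite_nontrivial _ _

theorem VirtuallyFree.of_injective {P : Type*} {G : Type*} [Group P] [Group G] (φ : P →* G)
    (hφ : Function.Injective φ) (hG : VirtuallyFree G) : VirtuallyFree P := by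
  obtain ⟨H, hH, ⟨hfree⟩⟩ := hG
  refine ⟨H.comap φ, ⟨by rw [index_comap]; exact FiniteIndex.index_ne_zero⟩, ⟨?_⟩⟩
  exact IsFreeGroup.ofMulEquiv ((subgroupOfEquivOfLe (map_comap_le φ H)).trans
    ((H.comap φ).equivMapOfInjective φ hφ).symm)

theorem VirtuallyFree.isCyclic {P : Type*} [CommGroup P] [IsMulTorsionFree P]
    (hP : VirtuallyFree P) : IsCyclic P := by
  obtain ⟨J, hJ, ⟨hfree⟩⟩ := hP
  have := IsFreeGroup.isCyclic (F := J)
  exact isCyclic_of_isCyclic_finiteIndex J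

theorem HasZxZSummand.not_virtuallyFree {G : Type*} [Group G] (hG : HasZxZSummand G) :
    ¬ VirtuallyFree G := by
  obtain ⟨H, -, -, ⟨e⟩⟩ := hG
  intro hVF
  exact not_isCyclic_multiplicative_int_prod_int
    (hVF.of_injective (H.subtype.comp e.symm.toMonoidHom)
      (H.subtype_injective.comp e.symm.injective)).isCyclic

theorem HasZxZSummand.of_mulEquiv {G G' : Type*} [Group G] [Group G'] (e : G ≃* G')
    (hG' : HasZxZSummand G') : HasZxZSummand G := by
  obtain ⟨H, K, hHK, ⟨f⟩⟩ := hG'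
  exact ⟨e.symm.mapSubgroup H, e.symm.mapSubgroup K, e.symm.mapSubgroup.isCompl hHK,
    ⟨(e.symm.subgroupMap H).symm.trans f⟩⟩

def topProdBotEquiv (A C : Type*) [Group A] [Group C] :
    ((⊤ : Subgroup A).prod (⊥ : Subgroup C)) ≃* A :=
  (prodEquiv ⊤ ⊥).trans ((topEquiv.prodCongr (MulEquiv.refl _)).trans MulEquiv.prodUnique)

theorem hasZxZSummand_prod (C : Type*) [Group C] :
    HasZxZSummand (Multiplicative (ℤ × ℤ) × C) := by
  refine ⟨(⊤ : Subgroup _).prod ⊥, (⊥ : Subgroup _).prod ⊤, ⟨?_, ?_⟩, ⟨topProdBotEquiv _ _⟩⟩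
  · rw [disjoint_iff, eq_bot_iff]
    rintro ⟨a, c⟩ ⟨⟨-, hc⟩, ha, -⟩
    simp_all
  · rw [codisjoint_iff, eq_top_iff]
    rintro ⟨a, c⟩ -
    rw [← mul_one a, ← one_mul c, ← Prod.mk_mul_mk]
    exact mul_mem_sup ⟨mem_top a, one_mem _⟩ ⟨one_mem _, mem_top c⟩

theorem virtuallyFree_prod (F T : Type*) [Group F] [IsFreeGroup F] [Group T] [Finite T] :
    VirtuallyFree (F × T) :=
  ⟨(⊤ : Subgroup F).prod ⊥, ⟨by simp [index_prod, Nat.card_pos.ne']⟩,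
    ⟨IsFreeGroup.ofMulEquiv (topProdBotEquiv F T).symm⟩⟩

theorem isFreeGroup_multiplicative_finsupp_int (ι : Type*) [Subsingleton ι] :
    IsFreeGroup (Multiplicative (ι →₀ ℤ)) := by
  rcases isEmpty_or_nonempty ι with hι | ⟨⟨i⟩⟩
  · exact IsFreeGroup.ofMulEquiv (MulEquiv.ofUnique : FreeGroup ι ≃* _)
  · have := uniqueOfSubsingleton i
    exact IsFreeGroup.ofMulEquiv ((FreeGroup.mulEquivIntOfUnique (α := ι)).trans
      (AddEquiv.toMultiplicative (Finsupp.uniqueAddEquiv i).symm))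

noncomputable def finsuppFinAddTwoEquiv (m : ℕ) : (Fin (2 + m) →₀ ℤ) ≃+ (ℤ × ℤ) × (Fin m →₀ ℤ) :=
  (Finsupp.domCongr finSumFinEquiv.symm).trans (Finsupp.sumFinsuppAddEquivProdFinsupp.trans
    (AddEquiv.prodCongr ((Finsupp.linearEquivFunOnFinite ℤ ℤ (Fin 2)).trans
      (LinearEquiv.finTwoArrow ℤ ℤ)).toAddEquiv (AddEquiv.refl _)))

theorem hasZxZSummand_or_virtuallyFree {G : Type*} [CommGroup G] (hG : Group.FG G) :
    HasZxZSummand G ∨ VirtuallyFree G := by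
  have : AddGroup.FG (Additive G) := GroupFG.iff_add_fg.1 hG
  obtain ⟨n, ι, _, p, hp, k, ⟨f⟩⟩ := AddCommGroup.equiv_free_prod_directSum_zmod (Additive G)
  have : ∀ i, NeZero (p i ^ k i) := fun i => ⟨pow_ne_zero _ (hp i).ne_zero⟩
  have : Finite (⨁ i, ZMod (p i ^ k i)) :=
    Finite.of_equiv _ DFinsupp.equivFunOnFintype.symm
  let e : G ≃* Multiplicative ((Fin n →₀ ℤ) × ⨁ i, ZMod (p i ^ k i)) :=
    MulEquiv.toAdditive.symm f
  rcases le_or_gt n 1 with hn | hn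
  · have : Subsingleton (Fin n) := Fin.subsingleton_iff_le_one.2 hn
    have := isFreeGroup_multiplicative_finsupp_int (Fin n)
    let e' := e.trans (MulEquiv.prodMultiplicative _ _)
    exact .inr <| (virtuallyFree_prod _ _).of_injective e'.toMonoidHom e'.injective
  · obtain ⟨m, rfl⟩ := Nat.exists_eq_add_of_le hn
    exact .inl <| (hasZxZSummand_prod _).of_mulEquiv <| e.trans <|
      (AddEquiv.toMultiplicative ((finsuppFinAddTwoEquiv m).prodCongr (AddEquiv.refl _) |>.trans
        AddEquiv.prodAssoc)).trans (MulEquiv.prodMultiplicative _ _)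

/-- Let `G` be a finitely generated commutative group. Then `ℤ × ℤ` embeds in `G` as a
direct summand if and only if `G` is not virtually free; consequently — granting that
`G-TCF` does not exist whenever `ℤ × ℤ` is a direct summand of `G`, while `G-TCF` exists
for finitely generated virtually free `G` — the theory `G-TCF` exists if and only if `G`
is virtually free. -/
theorem statement16 {G : Type u} [CommGroup G] (hfg : Group.FG G)
    (TCFexists : ∀ (A : Type u) [Group A], Prop)
    (h1 : ∀ (A : Type u) [Group A], Group.FG A → VirtuallyFree A → TCFexists A)
    (h2 : ∀ (A : Type u) [Group A], HasZxZSummand A → ¬ TCFexists A) :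
    (HasZxZSummand G ↔ ¬ VirtuallyFree G) ∧ (TCFexists G ↔ VirtuallyFree G) := by
  have hsummand : HasZxZSummand G ↔ ¬ VirtuallyFree G :=
    ⟨HasZxZSummand.not_virtuallyFree, (hasZxZSummand_or_virtuallyFree hfg).resolve_right⟩
  refine ⟨hsummand, fun hTCF => ?_, h1 G hfg⟩
  by_contra hVF
  exact h2 G (hsummand.2 hVF) hTCF
end
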